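/- arXiv:1804.10055 — 6 statements merged into one kernel-verified Lean document; each statement's English description precedes it below -/
import Mathlib

section
/- A finite set of vectors {v_1, ..., v_n} in ℝ^k satisfies ∑ v_i ⊗ v_i = I_k if and only if there exists an orthonormal basis {f_1, ..., f_n} of ℝ^n such that v_i is the orthogonal projection of f_i onto ℝ^k (viewed as the subspace of vectors whose last n−k coordinates vanish). -/
/-!
Let `V` be the `n × k` matrix with rows `v i`. The frame condition says `Vᵀ V = 1`, i.e. the
columns of `V` are orthonormal in `ℝⁿ`. Extending them to an orthonormal basis of `ℝⁿ` gives an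
orthogonal matrix whose first `k` columns are those of `V`; its rows are again orthonormal and form
the basis `f`. Conversely, the columns of the orthogonal matrix with rows `f i` are orthonormal,
and the first `k` of them are the columns of `V`.
-/

open Module Function

namespace OrthonormalBasis

variable {𝕜 ι κ : Type*} [RCLike 𝕜] [Fintype ι] [Fintype κ]

theorem sum_apply_mul_conj_apply [DecidableEq κ] (b : OrthonormalBasis ι 𝕜 (EuclideanSpace 𝕜 κ))
    (a c : κ) :
    ∑ i, b i a * starRingEnd 𝕜 (b i c) = if a = c then 1 else 0 := by
  have := b.sum_inner_mul_inner (EuclideanSpace.single a 1) (EuclideanSpace.single c 1)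
  simpa [EuclideanSpace.inner_single_left, EuclideanSpace.inner_single_right, PiLp.single_apply,
    eq_comm] using this

theorem orthonormal_transpose (b : OrthonormalBasis ι 𝕜 (EuclideanSpace 𝕜 κ)) :
    Orthonormal 𝕜 (fun j : κ => WithLp.toLp 2 (fun i => b i j)) := by
  classical
  rw [orthonormal_iff_ite]
  intro a c
  rw [PiLp.inner_apply]
  simpa [mul_comm, eq_comm] using b.sum_apply_mul_conj_apply c a

noncomputable def transpose (b : OrthonormalBasis ι 𝕜 (EuclideanSpace 𝕜 κ)) :
    OrthonormalBasis κ 𝕜 (EuclideanSpace 𝕜 ι) :=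
  OrthonormalBasis.mk b.orthonormal_transpose <|
    (b.orthonormal_transpose.linearIndependent.span_eq_top_of_card_eq_finrank' <| by
      rw [finrank_euclideanSpace, ← finrank_eq_card_basis b.toBasis, finrank_euclideanSpace]).ge

@[simp]
theorem transpose_apply (b : OrthonormalBasis ι 𝕜 (EuclideanSpace 𝕜 κ)) (j : κ) (i : ι) :
    b.transpose j i = b i j := by
  simp [transpose]

end OrthonormalBasis

theorem Orthonormal.exists_orthonormalBasis_extension_of_injective {𝕜 E ι κ : Type*} [RCLike 𝕜]
    [NormedAddCommGroup E] [InnerProductSpace 𝕜 E] [FiniteDimensional 𝕜 E] [Fintype ι]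
    {u : κ → E} (hu : Orthonormal 𝕜 u) {e : κ → ι} (he : Injective e)
    (card_ι : finrank 𝕜 E = Fintype.card ι) :
    ∃ b : OrthonormalBasis ι 𝕜 E, ∀ j, b (e j) = u j := by
  have hext : ∀ j, extend e u 0 (e j) = u j := he.extend_apply u 0
  have hrange : Orthonormal 𝕜 ((Set.range e).domRestrict (extend e u 0)) := by
    convert hu.comp _ (Equiv.ofInjective e he).symm.injective
    funext ⟨_, j, rfl⟩
    simp [hext]
  obtain ⟨b, hb⟩ := hrange.exists_orthonormalBasis_extension_of_card_eq card_ι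
  exact ⟨b, fun j => (hb _ ⟨j, rfl⟩).trans (hext j)⟩

theorem Matrix.sum_vecMulVec_self_eq_one_iff_orthonormal {ι κ : Type*} [Fintype ι]
    [DecidableEq κ] (v : ι → κ → ℝ) :
    ∑ i, vecMulVec (v i) (v i) = 1 ↔
      Orthonormal ℝ (fun j : κ => WithLp.toLp 2 (fun i => v i j)) := by
  rw [orthonormal_iff_ite, ← Matrix.ext_iff]
  simp [Matrix.sum_apply, vecMulVec_apply, one_apply, PiLp.inner_apply, mul_comm]

/-- A family of vectors `v 1, ..., v n` in `ℝ^k` satisfies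
`∑ vᵢ ⊗ vᵢ = I_k` (i.e. is a tight frame) if and only if there is an
orthonormal basis `f 1, ..., f n` of `ℝ^n` such that each `v i` is the orthogonal
projection of `f i` onto `ℝ^k` (the subspace of vectors whose last `n - k`
coordinates vanish), i.e. `v i j = f i j` for `j < k`. -/
theorem stmt_0 (n k : ℕ) (h : k ≤ n) (v : Fin n → Fin k → ℝ) :
    (∑ i, Matrix.vecMulVec (v i) (v i) = (1 : Matrix (Fin k) (Fin k) ℝ)) ↔
    ∃ b : OrthonormalBasis (Fin n) ℝ (EuclideanSpace ℝ (Fin n)),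
      ∀ (i : Fin n) (j : Fin k), v i j = b i (Fin.castLE h j) := by
  rw [Matrix.sum_vecMulVec_self_eq_one_iff_orthonormal]
  constructor
  · intro hv
    obtain ⟨g, hg⟩ := hv.exists_orthonormalBasis_extension_of_injective (Fin.castLE_injective h)
      (by simp)
    exact ⟨g.transpose, fun i j => by simp [hg]⟩
  · rintro ⟨b, hb⟩
    have hcols : (fun j => WithLp.toLp 2 fun i => v i j) = b.transpose ∘ Fin.castLE h := by
      ext j i
      simp [hb]
    exact hcols ▸ b.transpose.orthonormal.comp _ (Fin.castLE_injective h)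
end

section
/- Let v_1, ..., v_n ∈ ℝ^k with ℝ^k embedded in ℝ^n. Then det(∑_{i=1}^n v_i ⊗ v_i) = 1 (as an operator on ℝ^k) if and only if Λ^k P_k = ∑_{L ∈ C([n],k)} v_L ⊗ v_L, where P_k is the orthogonal projection of ℝ^n onto ℝ^k and v_L = v_{i_1} ∧ ... ∧ v_{i_k} for L = {i_1 < ... < i_k}. -/
/-- Coordinates of the wedge product of `ℓ` vectors of `ℝ^n` in the standard
basis of `Λ^ℓ(ℝ^n)`. -/
noncomputable def wedgeVec {n ℓ : ℕ} (x : Fin ℓ → Fin n → ℝ) :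
    {s : Finset (Fin n) // s.card = ℓ} → ℝ :=
  fun I => Matrix.det (Matrix.of fun a b : Fin ℓ => x a (I.1.orderIsoOfFin I.2 b))

/-- The `ℓ`-th compound matrix (the matrix of `Λ^ℓ A` in the standard basis). -/
noncomputable def extPow {n : ℕ} (ℓ : ℕ) (A : Matrix (Fin n) (Fin n) ℝ) :
    Matrix {s : Finset (Fin n) // s.card = ℓ} {s : Finset (Fin n) // s.card = ℓ} ℝ :=
  Matrix.of fun I J => Matrix.det (Matrix.of fun a b : Fin ℓ =>
    A (I.1.orderIsoOfFin I.2 a) (J.1.orderIsoOfFin J.2 b))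

/-- The embedding `ℝ^k ⊆ ℝ^n` as the vectors whose last `n - k` coordinates
vanish. -/
def embedVec {n k : ℕ} (h : k ≤ n) (w : Fin k → ℝ) : Fin n → ℝ :=
  fun i => if hi : (i : ℕ) < k then w ⟨i, hi⟩ else 0

section Aux
open Finset Matrix

lemma image_iso {n k : ℕ} (L : {s : Finset (Fin n) // s.card = k}) (σ : Equiv.Perm (Fin k)) :
    Finset.image (fun a => (L.1.orderIsoOfFin L.2 (σ a) : Fin n)) Finset.univ = L.1 := by
  ext x
  simp only [Finset.mem_image, Finset.mem_univ, true_and]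
  constructor
  · rintro ⟨a, rfl⟩; exact (L.1.orderIsoOfFin L.2 (σ a)).2
  · intro hx
    exact ⟨σ.symm ((L.1.orderIsoOfFin L.2).symm ⟨x, hx⟩), by simp⟩

lemma cb (n k : ℕ) (v : Fin n → Fin k → ℝ) :
    Matrix.det (∑ i, Matrix.vecMulVec (v i) (v i)) =
    ∑ L : {s : Finset (Fin n) // s.card = k},
      (Matrix.det (Matrix.of fun a b : Fin k => v (L.1.orderIsoOfFin L.2 a) b))^2 := by
  classical
  have h1 : Matrix.det (∑ i, Matrix.vecMulVec (v i) (v i)) =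
      Matrix.detRowAlternating (fun a => ∑ i : Fin n, (v i a) • (v i)) := by
    rw [Matrix.det]
    congr 1
    ext a b
    simp [Matrix.vecMulVec, Matrix.sum_apply, Finset.sum_apply]
  rw [h1, show (Matrix.detRowAlternating (fun a => ∑ i : Fin n, (v i a) • (v i)) : ℝ)
      = ∑ r : Fin k → Fin n, Matrix.detRowAlternating (fun a => (v (r a) a) • (v (r a))) from
    Matrix.detRowAlternating.toMultilinearMap.map_sum _]
  have h2 : ∀ r : Fin k → Fin n,
      Matrix.detRowAlternating (fun a => (v (r a) a) • (v (r a))) =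
      (∏ a, v (r a) a) * Matrix.det (Matrix.of fun a b => v (r a) b) := by
    intro r
    rw [show (Matrix.detRowAlternating (fun a => (v (r a) a) • (v (r a))) : ℝ)
        = (∏ a, v (r a) a) • Matrix.detRowAlternating (fun a => (v (r a))) from
      Matrix.detRowAlternating.toMultilinearMap.map_smul_univ _ _]
    rw [smul_eq_mul]
    rfl
  simp only [h2]
  rw [← Finset.sum_filter_add_sum_filter_not Finset.univ
    (fun r : Fin k → Fin n => Function.Injective r)]
  have h3 : ∑ r ∈ Finset.univ.filter (fun r : Fin k → Fin n => ¬ Function.Injective r),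
      (∏ a, v (r a) a) * Matrix.det (Matrix.of fun a b => v (r a) b) = 0 := by
    apply Finset.sum_eq_zero
    intro r hr
    simp only [Finset.mem_filter, Function.Injective, not_forall] at hr
    obtain ⟨a, b, hab, hne⟩ := hr.2
    have : Matrix.det (Matrix.of fun a b => v (r a) b) = 0 := by
      apply Matrix.det_zero_of_row_eq hne
      ext c; simp [hab]
    rw [this, mul_zero]
  rw [h3, add_zero]
  have key : ∑ L : {s : Finset (Fin n) // s.card = k},
      (Matrix.det (Matrix.of fun a b : Fin k => v (L.1.orderIsoOfFin L.2 a) b))^2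
      = ∑ p : {s : Finset (Fin n) // s.card = k} × Equiv.Perm (Fin k),
        ((Equiv.Perm.sign p.2 : ℤ) : ℝ) *
          (∏ a, v (p.1.1.orderIsoOfFin p.1.2 (p.2 a)) a) *
          Matrix.det (Matrix.of fun a b : Fin k => v (p.1.1.orderIsoOfFin p.1.2 a) b) := by
    rw [Fintype.sum_prod_type]
    apply Finset.sum_congr rfl
    intro L _
    rw [pow_two]
    nth_rewrite 1 [Matrix.det_apply' (Matrix.of fun a b : Fin k => v (L.1.orderIsoOfFin L.2 a) b)]
    rw [Finset.sum_mul]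
    apply Finset.sum_congr rfl
    intro σ _
    rfl
  rw [key]
  symm
  apply Finset.sum_bij (i := fun (p : {s : Finset (Fin n) // s.card = k} × Equiv.Perm (Fin k)) _ =>
    (fun a => (p.1.1.orderIsoOfFin p.1.2 (p.2 a) : Fin n)))
  · intro p _
    simp only [Finset.mem_filter, Finset.mem_univ, true_and]
    intro a b hab
    exact p.2.injective ((p.1.1.orderIsoOfFin p.1.2).injective (Subtype.ext hab))
  · rintro ⟨L1, σ1⟩ _ ⟨L2, σ2⟩ _ hpq
    have hL : L1 = L2 := by
      apply Subtype.ext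
      rw [← image_iso L1 σ1, ← image_iso L2 σ2]
      exact congrArg (fun r => Finset.image r Finset.univ) hpq
    subst hL
    have hσ : σ1 = σ2 := by
      ext a
      exact congrArg Fin.val
        ((L1.1.orderIsoOfFin L1.2).injective (Subtype.ext (congrFun hpq a)))
    rw [hσ]
  · intro r hr
    simp only [Finset.mem_filter, Finset.mem_univ, true_and] at hr
    have hcard : (Finset.image r Finset.univ).card = k := by
      rw [Finset.card_image_of_injective _ hr, Finset.card_univ, Fintype.card_fin]
    have einj : Function.Injective (fun a =>
        ((Finset.image r Finset.univ).orderIsoOfFin hcard).symm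
          ⟨r a, Finset.mem_image_of_mem r (Finset.mem_univ a)⟩) := by
      intro a b hab
      apply hr
      have := congrArg ((Finset.image r Finset.univ).orderIsoOfFin hcard) hab
      simp only [OrderIso.apply_symm_apply] at this
      exact congrArg Subtype.val this
    refine ⟨(⟨Finset.image r Finset.univ, hcard⟩,
      Equiv.ofBijective _ (Finite.injective_iff_bijective.mp einj)), Finset.mem_univ _, ?_⟩
    funext a
    simp [Equiv.ofBijective]
  · intro p _
    have hdet : Matrix.det (Matrix.of fun a b : Fin k => v (p.1.1.orderIsoOfFin p.1.2 (p.2 a)) b)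
        = ((Equiv.Perm.sign p.2 : ℤ) : ℝ) *
          Matrix.det (Matrix.of fun a b : Fin k => v (p.1.1.orderIsoOfFin p.1.2 a) b) := by
      rw [show (Matrix.of fun a b : Fin k => v (p.1.1.orderIsoOfFin p.1.2 (p.2 a)) b)
          = (Matrix.of fun a b : Fin k => v (p.1.1.orderIsoOfFin p.1.2 a) b).submatrix p.2 id
        from rfl, Matrix.det_permute]
    rw [hdet]
    ring

section K0

variable {n k : ℕ} (h : k ≤ n)

def K0set : Finset (Fin n) := (Finset.univ : Finset (Fin k)).map (Fin.castLEEmb h)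

lemma mem_K0set (i : Fin n) : i ∈ K0set h ↔ (i : ℕ) < k := by
  simp only [K0set, Finset.mem_map, Finset.mem_univ, true_and]
  constructor
  · rintro ⟨a, rfl⟩; exact a.2
  · intro hi; exact ⟨⟨i, hi⟩, rfl⟩

lemma card_K0set : (K0set h).card = k := by
  simp [K0set]

lemma orderIso_K0set (hc : (K0set h).card = k) (b : Fin k) :
    ((K0set h).orderIsoOfFin hc b : Fin n) = Fin.castLE h b := by
  have hu := Finset.orderEmbOfFin_unique hc (f := fun b : Fin k => Fin.castLE h b)
    (fun x => (mem_K0set h _).2 x.2) (fun a b hab => hab)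
  rw [Finset.coe_orderIsoOfFin_apply, ← hu]

end K0

lemma exists_big {n k : ℕ} (h : k ≤ n) (I : {s : Finset (Fin n) // s.card = k})
    (hI : I ≠ (⟨K0set h, card_K0set h⟩ : {s : Finset (Fin n) // s.card = k})) :
    ∃ j ∈ I.1, ¬ (j : ℕ) < k := by
  by_contra hc
  push_neg at hc
  apply hI
  apply Subtype.ext
  apply Finset.eq_of_subset_of_card_le
  · intro j hj
    exact (mem_K0set h j).2 (hc j hj)
  · rw [I.2, card_K0set h]


end Aux

open Finset Matrix in
/-- for `v 1, ..., v n ∈ ℝ^k ⊆ ℝ^n`, one has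
`det (∑ vᵢ ⊗ vᵢ) = 1` (as an operator on `ℝ^k`) iff
`Λ^k P_k = ∑_{L ∈ C([n],k)} v_L ⊗ v_L`, where `P_k` is the orthogonal
projection of `ℝ^n` onto `ℝ^k` and `v_L = v_{i₁} ∧ ... ∧ v_{i_k}` (wedge of the
embedded vectors) for `L = {i₁ < ... < i_k}`. -/
theorem stmt_7 (n k : ℕ) (h : k ≤ n) (v : Fin n → Fin k → ℝ) :
    Matrix.det (∑ i, Matrix.vecMulVec (v i) (v i)) = 1 ↔
    extPow k (Matrix.diagonal fun i : Fin n => if (i : ℕ) < k then (1 : ℝ) else 0) =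
      ∑ L : {s : Finset (Fin n) // s.card = k},
        Matrix.vecMulVec (wedgeVec fun a => embedVec h (v (L.1.orderIsoOfFin L.2 a)))
          (wedgeVec fun a => embedVec h (v (L.1.orderIsoOfFin L.2 a))) := by
  classical
  set K0 : {s : Finset (Fin n) // s.card = k} := ⟨K0set h, card_K0set h⟩ with hK0
  set d : Fin n → ℝ := fun i => if (i : ℕ) < k then (1 : ℝ) else 0 with hd
  set w : {s : Finset (Fin n) // s.card = k} → {s : Finset (Fin n) // s.card = k} → ℝ :=
    fun L => wedgeVec (fun a => embedVec h (v (L.1.orderIsoOfFin L.2 a))) with hw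
  have hw0 : ∀ L I, I ≠ K0 → w L I = 0 := by
    intro L I hI
    obtain ⟨j, hj, hjk⟩ := exists_big h I hI
    apply Matrix.det_eq_zero_of_column_eq_zero ((I.1.orderIsoOfFin I.2).symm ⟨j, hj⟩)
    intro a
    have hcol : (I.1.orderIsoOfFin I.2 ((I.1.orderIsoOfFin I.2).symm ⟨j, hj⟩) : Fin n) = j := by
      rw [OrderIso.apply_symm_apply]
    show embedVec h (v (L.1.orderIsoOfFin L.2 a)) _ = 0
    rw [hcol, embedVec, dif_neg hjk]
  have hwK0 : ∀ L, w L K0 =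
      Matrix.det (Matrix.of fun a b : Fin k => v (L.1.orderIsoOfFin L.2 a) b) := by
    intro L
    show Matrix.det _ = _
    congr 1
    ext a b
    show embedVec h (v (L.1.orderIsoOfFin L.2 a)) (K0.1.orderIsoOfFin K0.2 b) = _
    have : (K0.1.orderIsoOfFin K0.2 b : Fin n) = Fin.castLE h b := orderIso_K0set h _ b
    rw [this]
    show (if hb : (b : ℕ) < k then
      v (L.1.orderIsoOfFin L.2 a) ⟨(b : ℕ), hb⟩ else 0) = _
    rw [dif_pos b.isLt]
    simp
  have hsum : ∀ I J, (∑ L : {s : Finset (Fin n) // s.card = k},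
      Matrix.vecMulVec (w L) (w L)) I J = ∑ L, w L I * w L J := by
    intro I J
    rw [Matrix.sum_apply]
    simp [Matrix.vecMulVec_apply]
  have hext : ∀ I J, extPow k (Matrix.diagonal d) I J =
      if I = K0 ∧ J = K0 then 1 else 0 := by
    intro I J
    by_cases hI : I = K0
    · by_cases hJ : J = K0
      · subst hI; subst hJ
        simp only [and_self, if_true]
        show Matrix.det _ = 1
        rw [show (Matrix.of fun a b : Fin k =>
            Matrix.diagonal d (K0.1.orderIsoOfFin K0.2 a) (K0.1.orderIsoOfFin K0.2 b))
            = (1 : Matrix (Fin k) (Fin k) ℝ) from ?_, Matrix.det_one]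
        ext a b
        rw [Matrix.of_apply]
        have ha : (K0.1.orderIsoOfFin K0.2 a : Fin n) = Fin.castLE h a := orderIso_K0set h _ a
        have hb : (K0.1.orderIsoOfFin K0.2 b : Fin n) = Fin.castLE h b := orderIso_K0set h _ b
        rw [ha, hb, Matrix.one_apply, Matrix.diagonal_apply]
        by_cases hab : a = b
        · subst hab
          simp [hd, (Fin.castLE h a).2]
        · rw [if_neg hab, if_neg (fun hcast => hab (Fin.castLE_injective h hcast))]
      · rw [if_neg (by tauto)]
        obtain ⟨j, hj, hjk⟩ := exists_big h J hJ
        apply Matrix.det_eq_zero_of_column_eq_zero ((J.1.orderIsoOfFin J.2).symm ⟨j, hj⟩)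
        intro a
        have hcol : (J.1.orderIsoOfFin J.2 ((J.1.orderIsoOfFin J.2).symm ⟨j, hj⟩) : Fin n) = j := by
          rw [OrderIso.apply_symm_apply]
        show Matrix.diagonal d _ _ = 0
        rw [hcol, Matrix.diagonal_apply]
        by_cases hij : (I.1.orderIsoOfFin I.2 a : Fin n) = j
        · rw [if_pos hij, hij, hd]; simp [hjk]
        · rw [if_neg hij]
    · rw [if_neg (by tauto)]
      obtain ⟨j, hj, hjk⟩ := exists_big h I hI
      apply Matrix.det_eq_zero_of_row_eq_zero ((I.1.orderIsoOfFin I.2).symm ⟨j, hj⟩)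
      intro b
      have hrow : (I.1.orderIsoOfFin I.2 ((I.1.orderIsoOfFin I.2).symm ⟨j, hj⟩) : Fin n) = j := by
        rw [OrderIso.apply_symm_apply]
      show Matrix.diagonal d _ _ = 0
      rw [hrow, Matrix.diagonal_apply]
      by_cases hij : j = (J.1.orderIsoOfFin J.2 b : Fin n)
      · rw [if_pos hij, hd]; simp [hjk]
      · rw [if_neg hij]
  have hdet : Matrix.det (∑ i, Matrix.vecMulVec (v i) (v i)) = ∑ L, w L K0 * w L K0 := by
    rw [cb n k v]
    apply Finset.sum_congr rfl
    intro L _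
    rw [hwK0 L, pow_two]
  constructor
  · intro h1
    ext I J
    rw [hsum, hext]
    by_cases hI : I = K0
    · by_cases hJ : J = K0
      · subst hI; subst hJ
        rw [if_pos ⟨rfl, rfl⟩, ← hdet, h1]
      · rw [if_neg (by tauto)]
        symm
        exact Finset.sum_eq_zero fun L _ => by rw [hw0 L J hJ, mul_zero]
    · rw [if_neg (by tauto)]
      symm
      exact Finset.sum_eq_zero fun L _ => by rw [hw0 L I hI, zero_mul]
  · intro h2
    have := congrFun (congrFun h2 K0) K0
    rw [hext] at this
    rw [if_pos ⟨rfl, rfl⟩] at this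
    have hs : (∑ L : {s : Finset (Fin n) // s.card = k},
        Matrix.vecMulVec (w L) (w L)) K0 K0 = ∑ L, w L K0 * w L K0 := hsum K0 K0
    rw [hdet]
    rw [← hs, ← this]
end

section
/- Let H be a k-dimensional subspace of ℝ^n with orthogonal complement H^⊥, and let P and P^⊥ be the orthogonal projections onto H and H^⊥. Then for every k-element subset L ⊆ {1,...,n}, the principal minor of P on rows and columns L equals the principal minor of P^⊥ on rows and columns {1,...,n} \ L: P_L = P^⊥_{[n]∖L}. -/
/-!
Identifying `H` with `𝕜^k`, the projection factors as `P = R S` with `S R = 1`: `R` is the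
inclusion of `H` and `S` the orthogonal projection onto it. Splitting the rows of `R` and the
columns of `S` along `L` and `Lᶜ` turns `S R = 1` into `S_L R_L = 1 - S_{Lᶜ} R_{Lᶜ}`. Since
`|L| = k` the blocks `R_L`, `S_L` are square, so
`det P_L = det (R_L S_L) = det (S_L R_L) = det (1 - S_{Lᶜ} R_{Lᶜ})`, which equals
`det (1 - R_{Lᶜ} S_{Lᶜ})` by Sylvester's determinant identity, and
`1 - R_{Lᶜ} S_{Lᶜ} = (1 - P)_{Lᶜ} = P^⊥_{Lᶜ}`.
-/

open Matrix

namespace Matrix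

variable {l m n α : Type*} [Fintype m] [DecidableEq m]

theorem det_mul_comm_of_card_eq [CommRing α] [Fintype n] [DecidableEq n] (A : Matrix m n α)
    (B : Matrix n m α) (h : Fintype.card m = Fintype.card n) : det (A * B) = det (B * A) := by
  let e : m ≃ n := Fintype.equivOfCardEq h
  have hAB : A * B = A.submatrix id e * B.submatrix e id := by
    rw [← submatrix_mul A B id e id e.bijective, submatrix_id_id]
  have hBA : B.submatrix e id * A.submatrix id e = (B * A).submatrix e e :=
    (submatrix_mul B A e id e Function.bijective_id).symm
  rw [hAB, det_mul_comm, hBA, det_submatrix_equiv_self]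

-- The ascriptions on `id` keep `*` from falling back to the `CStarMatrix` default instance.
theorem mul_eq_submatrix_mul_add_submatrix_compl_mul [NonUnitalNonAssocSemiring α]
    (A : Matrix l m α) (B : Matrix m n α) (L : Finset m) :
    A * B = A.submatrix (id : l → l) ((↑) : L → m) * B.submatrix (↑) (id : n → n) +
      A.submatrix (id : l → l) ((↑) : ↥Lᶜ → m) * B.submatrix (↑) (id : n → n) := by
  ext i j
  simp only [Matrix.add_apply, mul_apply]
  rw [← Finset.sum_add_sum_compl L]
  congr 1 <;> exact (Finset.sum_coe_sort _ (fun x => A i x * B x j)).symm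

theorem det_submatrix_mul_eq_det_submatrix_compl_one_sub_mul [CommRing α] {k : Type*}
    [Fintype k] [DecidableEq k] (R : Matrix m k α) (S : Matrix k m α) (hSR : S * R = 1)
    (L : Finset m) (hL : L.card = Fintype.card k) :
    det ((R * S : Matrix m m α).submatrix ((↑) : L → m) (↑)) =
      det ((1 - R * S : Matrix m m α).submatrix ((↑) : ↥Lᶜ → m) (↑)) := by
  have hsplit := mul_eq_submatrix_mul_add_submatrix_compl_mul S R L
  rw [hSR] at hsplit
  calc det ((R * S : Matrix m m α).submatrix ((↑) : L → m) (↑))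
      = det (S.submatrix (id : k → k) ((↑) : L → m) * R.submatrix (↑) (id : k → k)) := by
        rw [submatrix_mul _ _ _ id _ Function.bijective_id]
        exact det_mul_comm_of_card_eq _ _ (by simpa using hL)
    _ = det (1 - R.submatrix ((↑) : ↥Lᶜ → m) (id : k → k) *
          S.submatrix (id : k → k) (↑)) := by
        rw [eq_sub_of_add_eq hsplit.symm]
        exact det_one_sub_mul_comm _ _
    _ = det ((1 - R * S : Matrix m m α).submatrix ((↑) : ↥Lᶜ → m) (↑)) := by
        rw [submatrix_sub, Pi.sub_apply, Pi.sub_apply, submatrix_one _ Subtype.val_injective,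
          submatrix_mul _ _ _ id _ Function.bijective_id]

end Matrix

theorem Submodule.exists_toEuclideanLin_mul_eq_starProjection {𝕜 ι : Type*} [RCLike 𝕜]
    [Fintype ι] [DecidableEq ι] {k : ℕ} (H : Submodule 𝕜 (EuclideanSpace 𝕜 ι))
    (hH : Module.finrank 𝕜 H = k) :
    ∃ (R : Matrix ι (Fin k) 𝕜) (S : Matrix (Fin k) ι 𝕜),
      toEuclideanLin (R * S) = H.starProjection.toLinearMap ∧ S * R = 1 := by
  let e : H ≃ₗ[𝕜] EuclideanSpace 𝕜 (Fin k) := LinearEquiv.ofFinrankEq _ _ (by simp [hH])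
  refine ⟨(toLpLin 2 2).symm (H.subtype ∘ₗ e.symm.toLinearMap),
    (toLpLin 2 2).symm (e.toLinearMap ∘ₗ H.orthogonalProjectionOnto.toLinearMap), ?_, ?_⟩
  · rw [toLpLin_mul_same, LinearEquiv.apply_symm_apply, LinearEquiv.apply_symm_apply]
    ext x : 1
    simp only [LinearMap.comp_apply, LinearEquiv.coe_coe, LinearEquiv.symm_apply_apply]
    rfl
  · apply (toLpLin 2 2).injective
    ext x
    simp

/-- let `H` be a `k`-dimensional subspace of `ℝ^n` with orthogonal
complement `H^⊥`, and let `P`, `Pc` be the matrices of the orthogonal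
projections onto `H` and `H^⊥`. Then for every `k`-element subset
`L ⊆ {1, ..., n}`, the principal minor of `P` on rows and columns `L` equals the
principal minor of `Pc` on the complementary set: `P_L = P^⊥_{[n]∖L}`. -/
theorem stmt_9 (n k : ℕ) (H : Submodule ℝ (EuclideanSpace ℝ (Fin n)))
    (hH : Module.finrank ℝ H = k)
    (P Pc : Matrix (Fin n) (Fin n) ℝ)
    (hP : Matrix.toEuclideanLin P = (H.subtypeL.comp H.orthogonalProjection).toLinearMap)
    (hPc : Matrix.toEuclideanLin Pc = (Hᗮ.subtypeL.comp Hᗮ.orthogonalProjection).toLinearMap)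
    (L : Finset (Fin n)) (hL : L.card = k) :
    Matrix.det (Matrix.of fun a b : ↥L => P a b) =
      Matrix.det (Matrix.of fun a b : ↥(Lᶜ) => Pc a b) := by
  obtain ⟨R, S, hRS, hSR⟩ := H.exists_toEuclideanLin_mul_eq_starProjection hH
  have hP' : P = R * S := toEuclideanLin.injective (hP.trans hRS.symm)
  have hPc' : Pc = 1 - R * S := toEuclideanLin.injective <| by
    rw [hPc, map_sub, hRS, toLpLin_one]
    exact congrArg ContinuousLinearMap.toLinearMap H.starProjection_orthogonal
  subst hP' hPc'
  exact det_submatrix_mul_eq_det_submatrix_compl_one_sub_mul R S hSR L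
    (hL.trans (Fintype.card_fin k).symm)
end

section
/- Let U be an n×n orthogonal matrix and L ⊆ {1,...,n}. Then the determinant of the principal submatrix U_L (rows and columns in L) and the determinant of the complementary principal submatrix U_{[n]∖L} have equal absolute value: |det U_L| = |det U_{[n]∖L}|. -/
open scoped Matrix


/-- Lagrange's identity for orthogonal matrices: if `U` is an
`n × n` orthogonal matrix and `L ⊆ {1, ..., n}`, then the determinant of the
principal submatrix of `U` on rows and columns `L` and that of the complementary
principal submatrix have equal absolute value. -/
theorem stmt_10 (n : ℕ) (U : Matrix (Fin n) (Fin n) ℝ)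
    (hU : U ∈ Matrix.orthogonalGroup (Fin n) ℝ) (L : Finset (Fin n)) :
    |Matrix.det (Matrix.of fun a b : ↥L => U a b)| =
      |Matrix.det (Matrix.of fun a b : ↥(Lᶜ) => U a b)| := by
  classical
  rw [Matrix.mem_orthogonalGroup_iff] at hU
  -- star = transpose for real matrices
  have hUUt : U * Uᵀ = 1 := by simpa using hU
  let e : ↥L ⊕ {x : Fin n // ¬ x ∈ L} ≃ Fin n := Equiv.sumCompl (· ∈ L)
  set A : Matrix ↥L ↥L ℝ := Matrix.of fun a b : ↥L => U a b with hA
  set B : Matrix ↥L {x : Fin n // ¬ x ∈ L} ℝ := Matrix.of fun a b => U a b with hB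
  set C : Matrix {x : Fin n // ¬ x ∈ L} ↥L ℝ := Matrix.of fun a b => U a b with hC
  set D : Matrix {x : Fin n // ¬ x ∈ L} {x : Fin n // ¬ x ∈ L} ℝ :=
    Matrix.of fun a b => U a b with hD
  have hV : U.submatrix e e = Matrix.fromBlocks A B C D := by
    ext i j
    cases i <;> cases j <;> rfl
  have hVt : Uᵀ.submatrix e e = Matrix.fromBlocks Aᵀ Cᵀ Bᵀ Dᵀ := by
    ext i j
    cases i <;> cases j <;> rfl
  have h1 : Matrix.fromBlocks A B C D * Matrix.fromBlocks Aᵀ Cᵀ Bᵀ Dᵀ = 1 := by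
    rw [← hV, ← hVt, Matrix.submatrix_mul_equiv, hUUt, Matrix.submatrix_one_equiv]
  rw [Matrix.fromBlocks_multiply, ← Matrix.fromBlocks_one] at h1
  have h11 : A * Aᵀ + B * Bᵀ = 1 := congrArg Matrix.toBlocks₁₁ h1
  have h21 : C * Aᵀ + D * Bᵀ = 0 := congrArg Matrix.toBlocks₂₁ h1
  -- key identity
  have key : Matrix.fromBlocks A B C D * Matrix.fromBlocks Aᵀ 0 Bᵀ 1 =
      Matrix.fromBlocks 1 B 0 D := by
    rw [Matrix.fromBlocks_multiply]
    simp [h11, h21]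
  have hdet := congrArg Matrix.det key
  simp only [Matrix.det_mul, Matrix.det_fromBlocks_zero₁₂, Matrix.det_fromBlocks_zero₂₁,
    Matrix.det_transpose, Matrix.det_one, one_mul, mul_one] at hdet
  have hdetV : (Matrix.fromBlocks A B C D).det = U.det := by
    rw [← hV, Matrix.det_submatrix_equiv_self]
  have hUdet : |U.det| = 1 := by
    have := congrArg Matrix.det hUUt
    rw [Matrix.det_mul, Matrix.det_transpose, Matrix.det_one] at this
    nlinarith [abs_nonneg U.det, sq_abs U.det]
  have hDdet : D.det = (Matrix.of fun a b : ↥(Lᶜ) => U a b).det := by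
    rw [show D = (Matrix.of fun a b : ↥(Lᶜ) => U a b).submatrix
        (Equiv.subtypeEquivRight (fun x : Fin n => (Finset.mem_compl (a := x)).symm))
        (Equiv.subtypeEquivRight (fun x : Fin n => (Finset.mem_compl (a := x)).symm)) from by
      ext i j; rfl]
    exact Matrix.det_submatrix_equiv_self _ _
  rw [← hDdet, ← hdet, hdetV, abs_mul, hUdet, one_mul]
end

section
/- Let {v_1, ..., v_n} be a tight frame in ℝ^k, let t_1,...,t_n ∈ ℝ and x_1,...,x_n ∈ ℝ^k. Then det(∑_{i=1}^n (v_i + t_i x_i) ⊗ (v_i + t_i x_i)) = 1 + 2∑_{i=1}^n t_i ⟨x_i, v_i⟩ + o(√(t_1² + ... + t_n²)) as (t_1,...,t_n) → 0. Equivalently, the gradient of the map (t_1,...,t_n) ↦ det(∑(v_i + t_i x_i)⊗(v_i + t_i x_i)) at 0 is (2⟨x_1,v_1⟩, ..., 2⟨x_n,v_n⟩). -/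
open scoped Matrix

/-!
Put `M(t) = ∑ᵢ (vᵢ + tᵢ xᵢ)(vᵢ + tᵢ xᵢ)ᵀ`. Tightness gives `M(0) = I`, and
`M(t) = I + ∑ᵢ tᵢ (xᵢ vᵢᵀ + vᵢ xᵢᵀ) + O(‖t‖²)`. The derivative of `det` at `I` is the trace, as
`det (I + r A) = 1 + r tr A + O(r²)` and `det` is a polynomial in the entries; so by the chain
rule `det ∘ M` has derivative `t ↦ ∑ᵢ tᵢ tr (xᵢ vᵢᵀ + vᵢ xᵢᵀ) = 2 ∑ᵢ tᵢ ⟨xᵢ, vᵢ⟩` at `0`.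
-/

open scoped Matrix.Norms.Elementwise

namespace Matrix

theorem vecMulVec_add_smul_self {n R : Type*} [CommRing R] (v x : n → R) (s : R) :
    vecMulVec (v + s • x) (v + s • x) =
      vecMulVec v v + s • (vecMulVec x v + vecMulVec v x) + s ^ 2 • vecMulVec x x := by
  ext a b
  simp only [vecMulVec_apply, add_apply, smul_apply, Pi.add_apply, Pi.smul_apply, smul_eq_mul]
  ring

variable {𝕜 n : Type*} [NontriviallyNormedField 𝕜] [Fintype n] [DecidableEq n]

theorem differentiable_det : Differentiable 𝕜 (det : Matrix n n 𝕜 → 𝕜) := by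
  have hentry : ∀ i j, Differentiable 𝕜 fun M : Matrix n n 𝕜 => M i j := fun i j =>
    (differentiable_apply (𝕜 := 𝕜) (F' := fun _ : n => 𝕜) j).comp (differentiable_apply i)
  simp only [funext det_apply]
  fun_prop

theorem hasDerivAt_det_one_add_smul (M : Matrix n n 𝕜) :
    HasDerivAt (fun r : 𝕜 => det (1 + r • M)) (trace M) 0 := by
  rw [funext fun r : 𝕜 => det_one_add_smul r M]
  set p := (det (1 + (Polynomial.X : Polynomial 𝕜) • M.map Polynomial.C)).divX.divX
  simpa using (((hasDerivAt_id (0 : 𝕜)).const_mul (trace M)).const_add 1).fun_add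
    ((p.hasDerivAt 0).fun_mul (hasDerivAt_pow 2 (0 : 𝕜)))

theorem hasFDerivAt_det_one [CompleteSpace 𝕜] :
    HasFDerivAt (det : Matrix n n 𝕜 → 𝕜) (traceLinearMap n 𝕜 𝕜).toContinuousLinearMap 1 := by
  have hdet := (differentiable_det (𝕜 := 𝕜) (n := n) 1).hasFDerivAt
  convert hdet using 1
  ext1 M
  have hline : HasDerivAt (fun r : 𝕜 => (1 : Matrix n n 𝕜) + r • M) M 0 :=
    (((hasDerivAt_id (0 : 𝕜)).smul_const M).const_add 1).congr_deriv (one_smul 𝕜 M)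
  exact (hasDerivAt_det_one_add_smul M).unique (hdet.comp_hasDerivAt_of_eq 0 hline (by simp))

end Matrix

open Matrix

section TightFrame

variable {𝕜 ι n : Type*} [RCLike 𝕜] [Fintype ι] [Fintype n] (v x : ι → n → 𝕜)

theorem hasFDerivAt_sum_vecMulVec_add_smul :
    HasFDerivAt
      (fun t : EuclideanSpace 𝕜 ι => ∑ i, vecMulVec (v i + t i • x i) (v i + t i • x i))
      (∑ i, (EuclideanSpace.proj (𝕜 := 𝕜) i).smulRight
        (vecMulVec (x i) (v i) + vecMulVec (v i) (x i))) 0 := by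
  refine HasFDerivAt.fun_sum fun i _ => ?_
  rw [funext fun t : EuclideanSpace 𝕜 ι => vecMulVec_add_smul_self (v i) (x i) (t i)]
  have hproj := (EuclideanSpace.proj (𝕜 := 𝕜) i).hasFDerivAt (x := 0)
  have hlin := hproj.smul_const (vecMulVec (x i) (v i) + vecMulVec (v i) (x i))
  have hquad := (hproj.pow 2).smul_const (vecMulVec (x i) (x i))
  refine ((hlin.const_add (vecMulVec (v i) (v i))).fun_add hquad).congr_fderiv ?_
  ext t a b
  change _ = t i * (vecMulVec (x i) (v i) + vecMulVec (v i) (x i)) a b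
  simp [mul_add]

variable [DecidableEq n]

theorem hasFDerivAt_det_sum_vecMulVec_add_smul (hv : ∑ i, vecMulVec (v i) (v i) = 1) :
    HasFDerivAt
      (fun t : EuclideanSpace 𝕜 ι => det (∑ i, vecMulVec (v i + t i • x i) (v i + t i • x i)))
      (∑ i, (2 * x i ⬝ᵥ v i) • EuclideanSpace.proj (𝕜 := 𝕜) i) 0 := by
  have hM0 : ∑ i, vecMulVec (v i + (0 : EuclideanSpace 𝕜 ι) i • x i)
      (v i + (0 : EuclideanSpace 𝕜 ι) i • x i) = 1 := by simpa using hv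
  refine ((hM0 ▸ hasFDerivAt_det_one).comp 0
    (hasFDerivAt_sum_vecMulVec_add_smul v x)).congr_fderiv ?_
  ext1 t
  -- `change` bridges two defeq but syntactically different module structures on matrices
  change trace ((∑ i, (EuclideanSpace.proj (𝕜 := 𝕜) i).smulRight
    (vecMulVec (x i) (v i) + vecMulVec (v i) (x i))) t) = _
  simp only [_root_.sum_apply, ContinuousLinearMap.smulRight_apply, PiLp.proj_apply, smul_add,
    trace_sum, trace_add, trace_smul, trace_vecMulVec, smul_eq_mul, dotProduct_comm (v _),
    _root_.smul_apply]
  exact Finset.sum_congr rfl fun i _ => by ring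

end TightFrame

/-- Theorem 2 / `thm:determinant`: let `v 1, ..., v n` be a tight
frame in `ℝ^k`, `t₁, ..., t_n ∈ ℝ`, `x₁, ..., x_n ∈ ℝ^k`. Then
`det (∑ (vᵢ + tᵢ xᵢ) ⊗ (vᵢ + tᵢ xᵢ)) = 1 + 2 ∑ tᵢ ⟨xᵢ, vᵢ⟩ + o(√(t₁² + ... + t_n²))`
as `(t₁, ..., t_n) → 0` (the variable `t` ranges over `EuclideanSpace ℝ (Fin n)`,
whose norm is `√(t₁² + ... + t_n²)`). -/
theorem stmt_12 (n k : ℕ) (v : Fin n → Fin k → ℝ)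
    (hv : ∑ i, Matrix.vecMulVec (v i) (v i) = (1 : Matrix (Fin k) (Fin k) ℝ))
    (x : Fin n → Fin k → ℝ) :
    (fun t : EuclideanSpace ℝ (Fin n) =>
        Matrix.det (∑ i, Matrix.vecMulVec (v i + t i • x i) (v i + t i • x i))
          - (1 + 2 * ∑ i, t i * (x i ⬝ᵥ v i)))
      =o[nhds 0] fun t : EuclideanSpace ℝ (Fin n) => ‖t‖ := by
  have h := (hasFDerivAt_det_sum_vecMulVec_add_smul v x hv).isLittleO.norm_right
  simp only [sub_zero] at h
  refine h.congr_left fun t => ?_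
  simp only [PiLp.zero_apply, zero_smul, add_zero, hv, det_one, _root_.sum_apply, _root_.smul_apply,
    PiLp.proj_apply, smul_eq_mul, Finset.mul_sum, sub_sub]
  congr 2
  exact Finset.sum_congr rfl fun i _ => by ring
end

section
/- Let S = {v_1, ..., v_n} be a tight frame in ℝ^k with k×n matrix M = (v_1,...,v_n). For i ∈ [n], define d_S(i) ∈ Λ^{k-1}(ℝ^n) to be the (k−1)-form whose coordinate at the basis element e_L (for a (k−1)-subset L) is the determinant of the k×k submatrix of M on columns {i} ∪ L (with appropriate ordering, 0 if i ∈ L). Then ⟨d_S(i), d_S(j)⟩ = ⟨v_i, v_j⟩ for all i, j, and the vectors d_S(1), ..., d_S(n) form a tight frame in the subspace Λ^{k-1}(H^S), where H^S ⊆ ℝ^n is the row space of M. -/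
/-!
Let `r₀, …, r_k ∈ ℝⁿ` be the rows of `M`; tightness of the frame says exactly that they are
orthonormal. Expanding the determinant defining `d_S(i)` along its first column gives
`d_S(i) = ∑ₐ (-1)ᵃ vᵢ(a) uₐ`, where `uₐ ∈ Λᵏ(H^S)` is the wedge of all rows except `rₐ`.
By Cauchy–Binet, `⟨uₐ, u_b⟩` is the Gram determinant of two `k`-subfamilies of an orthonormal
family, which is `δₐ_b`; moreover the `uₐ` span `Λᵏ(H^S)`, since by multilinearity every wedge
of vectors of `H^S` is a combination of wedges of `k` rows. In matrix form, with `U` the matrix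
of rows `uₐ` and `S = diag((-1)ᵃ)`, the matrix with rows `d_S(i)` is `D = Mᵀ S U` with
`U Uᵀ = 1`, `M Mᵀ = 1` and `S² = 1`. Hence `D Dᵀ = Mᵀ M` (the Gram identity) and
`∑ d_S(i) ⊗ d_S(i) = Dᵀ D = Uᵀ U`, the orthogonal projection onto the span of the `uₐ`.
-/

open scoped Matrix

/-- For a frame `S = (v 1, ..., v n)` in `ℝ^(k+1)` with `(k+1) × n` matrix `M`
(columns the `vᵢ`), the `k`-form `d_S(i) ∈ Λ^k(ℝ^n)`: its coordinate at a
`k`-element subset `L` is the determinant of the `(k+1) × (k+1)` submatrix of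
`M` on the columns `{i} ∪ L` (column `i` first, then the columns of `L` in
increasing order); when `i ∈ L` two columns coincide and the value is `0`. -/
noncomputable def dS {n k : ℕ} (v : Fin n → Fin (k + 1) → ℝ) (i : Fin n) :
    {s : Finset (Fin n) // s.card = k} → ℝ :=
  fun L => Matrix.det (Matrix.of fun a b : Fin (k + 1) =>
    (Fin.cons (v i) (fun b' : Fin k => v (L.1.orderIsoOfFin L.2 b'))
      : Fin (k + 1) → Fin (k + 1) → ℝ) b a)

theorem Module.Basis.toDual_apply_eq_sum {R M ι : Type*} [CommSemiring R] [AddCommMonoid M]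
    [Module R M] [Fintype ι] [DecidableEq ι] (b : Module.Basis ι R M) (x y : M) :
    b.toDual x y = ∑ i, b.repr x i * b.repr y i := by
  calc b.toDual x y = b.toDual x (∑ i, b.repr y i • b i) := by rw [b.sum_repr]
    _ = ∑ i, b.repr x i * b.repr y i := by
      simp only [map_sum, map_smul, b.toDual_apply_left, smul_eq_mul, mul_comm]

theorem Module.Basis.exteriorPower_toDual {R M I : Type*} [CommRing R] [AddCommGroup M]
    [Module R M] [LinearOrder I] (b : Module.Basis I R M) (k : ℕ) :
    (b.exteriorPower k).toDual =
      exteriorPower.pairingDual R M k ∘ₗ exteriorPower.map k b.toDual := by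
  refine LinearMap.ext_basis (b.exteriorPower k) (b.exteriorPower k) fun s t => ?_
  rw [Module.Basis.toDual_apply, exteriorPower.basis_apply, exteriorPower.basis_apply,
    LinearMap.comp_apply, exteriorPower.map_apply_ιMulti_family]
  have h₁ : ∀ i, (b.toDual ∘ b) i (b i) = 1 := fun i => by simp [b.toDual_apply]
  have h₀ : ∀ ⦃i j⦄, i ≠ j → (b.toDual ∘ b) i (b j) = 0 := fun i j h => by simp [b.toDual_apply, h]
  split_ifs with hst
  · subst hst
    exact (exteriorPower.pairingDual_apply_apply_eq_one _ _ h₁ h₀ k _).symm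
  · exact (exteriorPower.pairingDual_apply_apply_eq_one_zero _ _ h₀ k _ _
      (Set.powersetCard.ofFinEmbEquiv.symm.injective.ne hst)).symm

theorem Pi.basisFun_toDual_apply {R ι : Type*} [CommSemiring R] [Fintype ι] [DecidableEq ι]
    (x y : ι → R) : (Pi.basisFun R ι).toDual x y = x ⬝ᵥ y := by
  simp [Module.Basis.toDual_apply_eq_sum, dotProduct]

theorem wedgeVec_eq_exteriorPower_repr {n ℓ : ℕ} (x : Fin ℓ → Fin n → ℝ)
    (L : {s : Finset (Fin n) // s.card = ℓ}) :
    wedgeVec x L = ((Pi.basisFun ℝ (Fin n)).exteriorPower ℓ).repr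
      (exteriorPower.ιMulti ℝ ℓ x) ⟨L.1, L.2⟩ := by
  rw [exteriorPower.basis_repr_apply, exteriorPower.ιMultiDual_apply_ιMulti]
  rfl

-- Cauchy–Binet
theorem sum_wedgeVec_mul_wedgeVec {n ℓ : ℕ} (x y : Fin ℓ → Fin n → ℝ) :
    ∑ L : {s : Finset (Fin n) // s.card = ℓ}, wedgeVec x L * wedgeVec y L =
      (Matrix.of fun a b => x a ⬝ᵥ y b).det := by
  set B := (Pi.basisFun ℝ (Fin n)).exteriorPower ℓ
  calc ∑ L : {s : Finset (Fin n) // s.card = ℓ}, wedgeVec x L * wedgeVec y L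
      = ∑ s, B.repr (exteriorPower.ιMulti ℝ ℓ x) s * B.repr (exteriorPower.ιMulti ℝ ℓ y) s :=
        Finset.sum_equiv (Equiv.subtypeEquivRight fun _ => Iff.rfl) (by simp) fun L _ => by
          simp only [wedgeVec_eq_exteriorPower_repr]; rfl
    _ = B.toDual (exteriorPower.ιMulti ℝ ℓ x) (exteriorPower.ιMulti ℝ ℓ y) :=
        by convert (B.toDual_apply_eq_sum _ _).symm
    _ = (Matrix.of fun a b => x a ⬝ᵥ y b).det := by
        rw [Module.Basis.exteriorPower_toDual, LinearMap.comp_apply,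
          exteriorPower.map_apply_ιMulti, exteriorPower.pairingDual_ιMulti_ιMulti]
        simp only [Function.comp_apply, Pi.basisFun_toDual_apply]
        exact (Matrix.det_transpose _).symm

theorem MultilinearMap.map_mem_span_of_mem_span {R M N ι κ : Type*} [CommSemiring R]
    [AddCommMonoid M] [Module R M] [AddCommMonoid N] [Module R N] [Fintype ι] [DecidableEq ι]
    [Fintype κ] (f : MultilinearMap R (fun _ : ι => M) N) (r : κ → M) {x : ι → M}
    (hx : ∀ a, x a ∈ Submodule.span R (Set.range r)) :
    f x ∈ Submodule.span R (Set.range fun g : ι → κ => f (r ∘ g)) := by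
  choose c hc using fun a => (Submodule.mem_span_range_iff_exists_fun R).1 (hx a)
  have hx' : x = fun a => ∑ j, c a j • r j := funext fun a => (hc a).symm
  rw [hx', f.map_sum]
  refine Submodule.sum_mem _ fun g _ => ?_
  rw [f.map_smul_univ (fun a => c a (g a)) (fun a => r (g a))]
  exact Submodule.smul_mem _ _ (Submodule.subset_span ⟨g, rfl⟩)

theorem AlternatingMap.map_comp_mem_span_succAbove {R M N : Type*} [CommRing R]
    [AddCommGroup M] [Module R M] [AddCommGroup N] [Module R N] {k : ℕ}
    (f : M [⋀^Fin k]→ₗ[R] N) (r : Fin (k + 1) → M) (g : Fin k → Fin (k + 1)) :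
    f (r ∘ g) ∈ Submodule.span R (Set.range fun a : Fin (k + 1) => f (r ∘ a.succAbove)) := by
  obtain ⟨a, ha⟩ : ∃ a, a ∉ Set.range g := by
    by_contra! hg
    simpa using Fintype.card_le_of_surjective g hg
  choose h hh using fun c => Fin.exists_succAbove_eq (y := a) fun hc => ha ⟨c, hc⟩
  have hrg : r ∘ g = (r ∘ a.succAbove) ∘ h := funext fun c => by simp [hh]
  rw [hrg]
  by_cases hinj : Function.Injective h
  · rw [show h = Equiv.ofBijective h hinj.bijective_of_finite from rfl, f.map_perm,
      Units.smul_def]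
    exact zsmul_mem (Submodule.subset_span (Set.mem_range_self a)) _
  · rw [f.map_eq_zero_of_not_injective _ fun hi => hinj hi.of_comp]
    exact Submodule.zero_mem _

noncomputable def wedgeAlternatingMap (n ℓ : ℕ) :
    (Fin n → ℝ) [⋀^Fin ℓ]→ₗ[ℝ] ({s : Finset (Fin n) // s.card = ℓ} → ℝ) :=
  AlternatingMap.pi fun I => Matrix.detRowAlternating.compLinearMap
    (LinearMap.funLeft ℝ ℝ fun b => (I.1.orderIsoOfFin I.2 b : Fin n))

theorem Matrix.sum_vecMulVec_eq_transpose_mul {ι m n R : Type*} [Fintype ι]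
    [NonUnitalNonAssocSemiring R] (A : Matrix ι m R) (B : Matrix ι n R) :
    ∑ i, Matrix.vecMulVec (A i) (B i) = Aᵀ * B := by
  ext a b
  simp [Matrix.mul_apply, Matrix.sum_apply, Matrix.vecMulVec_apply]

section OrthonormalRows

variable {m ι R : Type*} [Fintype m] [Fintype ι] [DecidableEq m] [CommRing R]
  {P : Matrix m ι R}

theorem Matrix.transpose_mul_self_mul_transpose_mul_self (h : P * Pᵀ = 1) :
    Pᵀ * P * (Pᵀ * P) = Pᵀ * P := by
  rw [Matrix.mul_assoc, ← Matrix.mul_assoc P, h, Matrix.one_mul]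

theorem Matrix.range_mulVecLin_transpose_mul_self (h : P * Pᵀ = 1) :
    LinearMap.range (Pᵀ * P).mulVecLin = Submodule.span R (Set.range P.row) := by
  rw [← Matrix.col_transpose P, ← Matrix.range_mulVecLin]
  refine le_antisymm ?_ ?_
  · rw [Matrix.mulVecLin_mul]
    exact LinearMap.range_comp_le_range _ _
  · conv_lhs => rw [← Matrix.mul_one Pᵀ, ← h, ← Matrix.mul_assoc, Matrix.mulVecLin_mul]
    exact LinearMap.range_comp_le_range _ _

end OrthonormalRows

theorem Matrix.row_mul_mem_span_row {l m n R : Type*} [Fintype m] [CommSemiring R]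
    (X : Matrix l m R) (Y : Matrix m n R) (i : l) :
    (X * Y).row i ∈ Submodule.span R (Set.range Y.row) := by
  rw [← range_vecMulLinear]
  exact ⟨X i, rfl⟩

section ComplWedge

variable {n k : ℕ}

noncomputable def complWedge (A : Matrix (Fin (k + 1)) (Fin n) ℝ) :
    Matrix (Fin (k + 1)) {s : Finset (Fin n) // s.card = k} ℝ :=
  Matrix.of fun a => wedgeVec (A.row ∘ a.succAbove)

theorem complWedge_mul_transpose {A : Matrix (Fin (k + 1)) (Fin n) ℝ} (hA : A * Aᵀ = 1) :
    complWedge A * (complWedge A)ᵀ = 1 := by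
  ext a b
  have hdot : ∀ p q, A.row p ⬝ᵥ A.row q = (1 : Matrix (Fin (k + 1)) (Fin (k + 1)) ℝ) p q :=
    fun p q => by rw [← hA]; rfl
  rw [Matrix.mul_apply]
  simp only [Matrix.transpose_apply, complWedge, Matrix.of_apply]
  rw [sum_wedgeVec_mul_wedgeVec]
  simp only [Function.comp_apply, hdot]
  by_cases hab : a = b
  · subst hab
    rw [Matrix.one_apply_eq]
    exact (congrArg Matrix.det (Matrix.submatrix_one _ Fin.succAbove_right_injective)).trans
      Matrix.det_one
  · rw [Matrix.one_apply_ne hab]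
    obtain ⟨c, rfl⟩ := Fin.exists_succAbove_eq (Ne.symm hab)
    exact Matrix.det_eq_zero_of_row_eq_zero c fun d =>
      Matrix.one_apply_ne (Fin.succAbove_ne _ _).symm

theorem span_wedgeVec_eq_span_complWedge (A : Matrix (Fin (k + 1)) (Fin n) ℝ) :
    Submodule.span ℝ {w | ∃ x : Fin k → Fin n → ℝ,
        (∀ a, x a ∈ Submodule.span ℝ (Set.range A.row)) ∧ w = wedgeVec x} =
      Submodule.span ℝ (Set.range (complWedge A).row) := by
  refine le_antisymm (Submodule.span_le.mpr ?_) (Submodule.span_le.mpr ?_)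
  · rintro _ ⟨x, hx, rfl⟩
    refine Submodule.span_le.mpr ?_
      ((wedgeAlternatingMap n k).toMultilinearMap.map_mem_span_of_mem_span A.row hx)
    rintro _ ⟨g, rfl⟩
    exact (wedgeAlternatingMap n k).map_comp_mem_span_succAbove A.row g
  · rintro _ ⟨a, rfl⟩
    exact Submodule.subset_span
      ⟨A.row ∘ a.succAbove, fun c => Submodule.subset_span ⟨_, rfl⟩, rfl⟩

theorem of_dS_eq_mul_complWedge (v : Fin n → Fin (k + 1) → ℝ) :
    Matrix.of (dS v) =
      Matrix.of v * Matrix.diagonal (fun a : Fin (k + 1) => (-1 : ℝ) ^ (a : ℕ)) *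
        complWedge (Matrix.of v)ᵀ := by
  ext i L
  rw [Matrix.of_apply, dS, Matrix.det_succ_column_zero, Matrix.mul_apply]
  refine Finset.sum_congr rfl fun a _ => ?_
  rw [Matrix.mul_diagonal, Matrix.of_apply, Matrix.of_apply, Fin.cons_zero, mul_comm (v i a)]
  rfl

end ComplWedge

/-- Lemma `lemma_porperies_d_S`: let `S = (v 1, ..., v n)` be a
tight frame in `ℝ^(k+1)` (dimension written as `k + 1`). Then the vectors
`d_S(i)` lie in `Λ^k(H^S)` (where `H^S ⊆ ℝ^n` is the row space of the matrix
`M = (v₁, ..., v_n)`), satisfy `⟨d_S(i), d_S(j)⟩ = ⟨vᵢ, vⱼ⟩` for all `i, j`, and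
form a tight frame in `Λ^k(H^S)`: the sum `G = ∑ d_S(i) ⊗ d_S(i)` is the
orthogonal projection (symmetric, idempotent, with range `Λ^k(H^S)`) of
`Λ^k(ℝ^n)` onto `Λ^k(H^S)`. -/
theorem stmt_13 (n k : ℕ) (v : Fin n → Fin (k + 1) → ℝ)
    (hv : ∑ i, Matrix.vecMulVec (v i) (v i) = (1 : Matrix (Fin (k + 1)) (Fin (k + 1)) ℝ)) :
    let HS : Submodule ℝ (Fin n → ℝ) :=
      Submodule.span ℝ (Set.range fun j : Fin (k + 1) => fun i : Fin n => v i j)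
    let W : Submodule ℝ ({s : Finset (Fin n) // s.card = k} → ℝ) :=
      Submodule.span ℝ {w | ∃ x : Fin k → (Fin n → ℝ), (∀ a, x a ∈ HS) ∧ w = wedgeVec x}
    (∀ i, dS v i ∈ W) ∧
    (∀ i j, ∑ L : {s : Finset (Fin n) // s.card = k}, dS v i L * dS v j L = v i ⬝ᵥ v j) ∧
    ((∑ i, Matrix.vecMulVec (dS v i) (dS v i)).IsSymm ∧
      (∑ i, Matrix.vecMulVec (dS v i) (dS v i)) * (∑ i, Matrix.vecMulVec (dS v i) (dS v i)) =
        (∑ i, Matrix.vecMulVec (dS v i) (dS v i)) ∧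
      LinearMap.range (∑ i, Matrix.vecMulVec (dS v i) (dS v i)).mulVecLin = W) := by
  intro HS W
  set V := Matrix.of v
  set U := complWedge Vᵀ
  set S := Matrix.diagonal fun a : Fin (k + 1) => (-1 : ℝ) ^ (a : ℕ)
  set D := Matrix.of (dS v)
  have hV : Vᵀ * V = 1 := (Matrix.sum_vecMulVec_eq_transpose_mul V V).symm.trans hv
  have hU : U * Uᵀ = 1 := complWedge_mul_transpose (by rwa [Matrix.transpose_transpose])
  have hS : S * S = 1 := by
    simp only [S, Matrix.diagonal_mul_diagonal, ← mul_pow, neg_one_mul, neg_neg, one_pow,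
      Matrix.diagonal_one]
  have hSt : Sᵀ = S := Matrix.diagonal_transpose _
  have hW : W = Submodule.span ℝ (Set.range U.row) := span_wedgeVec_eq_span_complWedge Vᵀ
  have hD : D = V * S * U := of_dS_eq_mul_complWedge v
  have hG : ∑ i, Matrix.vecMulVec (dS v i) (dS v i) = Uᵀ * U := by
    refine (Matrix.sum_vecMulVec_eq_transpose_mul D D).trans ?_
    rw [hD]
    simp only [Matrix.transpose_mul, hSt, Matrix.mul_assoc]
    rw [← Matrix.mul_assoc Vᵀ, hV, Matrix.one_mul, ← Matrix.mul_assoc S, hS, Matrix.one_mul]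
  refine ⟨fun i => ?_, fun i j => ?_, ?_, ?_, ?_⟩
  · rw [hW, show dS v i = D.row i from rfl, hD]
    exact Matrix.row_mul_mem_span_row _ _ i
  · have hDD : D * Dᵀ = V * Vᵀ := by
      rw [hD]
      simp only [Matrix.transpose_mul, hSt, Matrix.mul_assoc]
      rw [← Matrix.mul_assoc U, hU, Matrix.one_mul, ← Matrix.mul_assoc S, hS, Matrix.one_mul]
    exact congrFun (congrFun hDD i) j
  · rw [hG]
    simp [Matrix.IsSymm, Matrix.transpose_mul]
  · rw [hG]
    exact Matrix.transpose_mul_self_mul_transpose_mul_self hU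
  · rw [hG, Matrix.range_mulVecLin_transpose_mul_self hU, hW]
end
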